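/- arXiv:1004.4223 — 3 statements merged into one kernel-verified Lean document; each statement's English description precedes it below -/
import Mathlib

section
/- Let f : ℝ → ℝ be a function with f(0) = f(r) = 0, f(x) ≥ 0 on (0,r), f(x*) ≥ M for some x* ∈ (0,r), and |f'(x)| ≤ m everywhere (with m > 0, M > 0). Then ∫₀^r f(x) dx ≥ M²/m. -/
/-!
Since `|f'| ≤ m`, `f` lies above the tent `x ↦ M - m |x - x*|`, whose base is
`[x* - M/m, x* + M/m]` and whose area is `M²/m`. The zeros of `f` at `0` and `r` force this base
into `[0, r]`, where `f ≥ 0`, so the integral of `f` over `[0, r]` dominates the area of the tent.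
-/

open intervalIntegral Set

lemma sub_mul_abs_sub_le_of_abs_deriv_le {f : ℝ → ℝ} {m : ℝ} (hf : Differentiable ℝ f)
    (hderiv : ∀ x, |deriv f x| ≤ m) (c x : ℝ) : f c - m * |x - c| ≤ f x := by
  have := convex_univ.norm_image_sub_le_of_norm_deriv_le (fun z _ => hf z) (fun z _ => hderiv z)
    (mem_univ x) (mem_univ c)
  rw [Real.norm_eq_abs, Real.norm_eq_abs, abs_sub_comm c] at this
  linarith [le_abs_self (f c - f x)]

lemma integral_sub_mul_id (M m h : ℝ) :
    ∫ x in (0:ℝ)..h, (M - m * x) = M * h - m * h ^ 2 / 2 := by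
  rw [integral_sub intervalIntegrable_const (intervalIntegrable_id.const_mul m), integral_const,
    integral_const_mul, integral_id]
  simp only [smul_eq_mul]
  ring

section Tent

variable {f : ℝ → ℝ} {c M m : ℝ}

lemma div_le_abs_sub_of_tent_le (hm : 0 < m) (htent : ∀ x, M - m * |x - c| ≤ f x) {a : ℝ}
    (ha : f a = 0) : M / m ≤ |a - c| := by
  rw [div_le_iff₀' hm]
  linarith [htent a]

lemma sq_div_two_mul_le_integral_right_of_tent_le (hM : 0 ≤ M) (hm : 0 < m) (hf : Continuous f)
    (htent : ∀ x, M - m * |x - c| ≤ f x) : M ^ 2 / (2 * m) ≤ ∫ x in c..c + M / m, f x := by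
  have hwidth : 0 ≤ M / m := div_nonneg hM hm.le
  calc M ^ 2 / (2 * m) = ∫ x in (0:ℝ)..M / m, (M - m * x) := by
        rw [integral_sub_mul_id]; field_simp; ring
    _ = ∫ x in c..c + M / m, (M - m * (x - c)) := by
        rw [integral_comp_sub_right (fun x => M - m * x)]; simp
    _ ≤ ∫ x in c..c + M / m, f x := by
        have hramp : Continuous fun x => M - m * (x - c) := by fun_prop
        refine integral_mono_on (by linarith) (hramp.intervalIntegrable _ _)
          (hf.intervalIntegrable _ _) fun x hx => ?_
        simpa only [abs_of_nonneg (sub_nonneg.2 hx.1)] using htent x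

lemma sq_div_two_mul_le_integral_left_of_tent_le (hM : 0 ≤ M) (hm : 0 < m) (hf : Continuous f)
    (htent : ∀ x, M - m * |x - c| ≤ f x) : M ^ 2 / (2 * m) ≤ ∫ x in c - M / m..c, f x := by
  have := sq_div_two_mul_le_integral_right_of_tent_le (f := fun x => f (-x)) (c := -c) hM hm
    (hf.comp continuous_neg) fun x => by
      simpa only [← abs_neg (-x - c), neg_sub, sub_neg_eq_add, add_comm c] using htent (-x)
  rwa [integral_comp_neg, neg_neg, neg_add, neg_neg, ← sub_eq_add_neg] at this

lemma sq_div_le_integral_of_tent_le (hM : 0 ≤ M) (hm : 0 < m) (hf : Continuous f)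
    (htent : ∀ x, M - m * |x - c| ≤ f x) :
    M ^ 2 / m ≤ ∫ x in c - M / m..c + M / m, f x := by
  rw [← integral_add_adjacent_intervals (hf.intervalIntegrable _ c) (hf.intervalIntegrable c _)]
  have hhalves : M ^ 2 / m = M ^ 2 / (2 * m) + M ^ 2 / (2 * m) := by field_simp; ring
  linarith [sq_div_two_mul_le_integral_left_of_tent_le hM hm hf htent,
    sq_div_two_mul_le_integral_right_of_tent_le hM hm hf htent]

end Tent

theorem triangle_lower_bound_general (f : ℝ → ℝ) (r M m xstar : ℝ)
    (hM : 0 < M) (hm : 0 < m)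
    (hf : ContDiff ℝ 1 f)
    (h0 : f 0 = 0) (hfr : f r = 0)
    (hpos : ∀ x ∈ Set.Ioo (0:ℝ) r, 0 ≤ f x)
    (hxstar : xstar ∈ Set.Ioo (0:ℝ) r)
    (hMle : M ≤ f xstar)
    (hderiv : ∀ x, |deriv f x| ≤ m) :
    M ^ 2 / m ≤ ∫ x in (0:ℝ)..r, f x := by
  obtain ⟨hx0, hxr⟩ := hxstar
  have htent : ∀ x, M - m * |x - xstar| ≤ f x := fun x => by
    linarith [sub_mul_abs_sub_le_of_abs_deriv_le (hf.differentiable one_ne_zero) hderiv xstar x]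
  have hleft : M / m ≤ xstar := by
    simpa [abs_of_pos hx0] using div_le_abs_sub_of_tent_le hm htent h0
  have hright : xstar + M / m ≤ r := by
    have := div_le_abs_sub_of_tent_le hm htent hfr
    rw [abs_of_pos (sub_pos.2 hxr)] at this
    linarith
  have hnonneg : ∀ x ∈ Ioc 0 r, 0 ≤ f x := fun x hx =>
    hx.2.eq_or_lt.elim (fun h => h ▸ hfr.ge) fun h => hpos x ⟨hx.1, h⟩
  calc M ^ 2 / m ≤ ∫ x in xstar - M / m..xstar + M / m, f x :=
        sq_div_le_integral_of_tent_le hM.le hm hf.continuous htent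
    _ ≤ ∫ x in (0:ℝ)..r, f x :=
        integral_mono_interval (by linarith) (by linarith [div_pos hM hm]) hright
          (MeasureTheory.ae_restrict_of_forall_mem measurableSet_Ioc hnonneg)
          (hf.continuous.intervalIntegrable _ _)

theorem triangle_lower_bound (f : ℝ → ℝ) (r M m xstar : ℝ)
    (hr : 0 < r) (hM : 0 < M) (hm : 0 < m)
    (hf : ContDiff ℝ 1 f)
    (h0 : f 0 = 0) (hfr : f r = 0)
    (hpos : ∀ x ∈ Set.Ioo (0:ℝ) r, 0 ≤ f x)
    (hxstar : xstar ∈ Set.Ioo (0:ℝ) r)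
    (hMle : M ≤ f xstar)
    (hderiv : ∀ x, |deriv f x| ≤ m) :
    M ^ 2 / m ≤ ∫ x in (0:ℝ)..r, f x :=
  triangle_lower_bound_general f r M m xstar hM hm hf h0 hfr hpos hxstar hMle hderiv
end

section
/- Given k points x₁,...,x_k ∈ ℝ with k ≥ 2, whose maximum pairwise distance is Δ > 0, there exists a bipartition of the set into nonempty sets A and B such that the distance between A and B (minimum over a ∈ A, b ∈ B of |a - b|) is at least Δ/2^(k-2). -/
/-!
Sorted, the `k` points have `k - 1` consecutive gaps summing to at least `Δ`, so one gap is at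
least `Δ / (k - 1) ≥ Δ / 2 ^ (k - 2)`; cutting there gives the bipartition.
-/

section

variable {α : Type*} [Field α] [LinearOrder α] [IsStrictOrderedRing α]

/- Either the largest element `d` below `b` leaves a gap of `g` before `b`, or `[a, d]` still spans
`(n - 1) * g` inside a set with one element fewer. -/
theorem Finset.exists_gap_of_card_le_of_mul_le_sub {s : Finset α} {n : ℕ} {g a b : α}
    (hg : 0 < g) (ha : a ∈ s) (hb : b ∈ s) (hab : a < b) (hcard : s.card ≤ n + 1)
    (hspan : n * g ≤ b - a) :
    ∃ t ∈ s, ∃ u ∈ s, t + g ≤ u ∧ ∀ p ∈ s, p ≤ t ∨ u ≤ p := by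
  induction n generalizing s b with
  | zero =>
    exact absurd (Finset.card_le_one.mp hcard a ha b hb) hab.ne
  | succ m ih =>
    set below := s.filter (· < b)
    have ha' : a ∈ below := Finset.mem_filter.mpr ⟨ha, hab⟩
    set d := below.max' ⟨a, ha'⟩
    have hd : d ∈ below := below.max'_mem _
    have hd_s : d ∈ s := (Finset.mem_filter.mp hd).1
    have hd_lt : d < b := (Finset.mem_filter.mp hd).2
    have hle_d : ∀ p ∈ s, p < b → p ≤ d := fun p hp hpb =>
      below.le_max' p (Finset.mem_filter.mpr ⟨hp, hpb⟩)
    by_cases hgap : d + g ≤ b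
    · refine ⟨d, hd_s, b, hb, hgap, fun p hp => ?_⟩
      rcases lt_or_ge p b with hpb | hpb
      · exact .inl (hle_d p hp hpb)
      · exact .inr hpb
    · push_cast at hspan
      have hspan' : m * g ≤ d - a := by
        linarith [not_le.mp hgap]
      have had : a < d := by
        have : 0 ≤ (m : α) * g := by positivity
        linarith [not_le.mp hgap]
      have hcard' : below.card ≤ m + 1 := by
        have : below ⊂ s := Finset.filter_ssubset.mpr ⟨b, hb, lt_irrefl b⟩
        have := Finset.card_lt_card this
        omega
      obtain ⟨t, ht, u, hu, htu, hsplit⟩ := ih ha' hd had hcard' hspan'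
      refine ⟨t, (Finset.mem_filter.mp ht).1, u, (Finset.mem_filter.mp hu).1, htu, fun p hp => ?_⟩
      rcases lt_or_ge p b with hpb | hpb
      · exact hsplit p (Finset.mem_filter.mpr ⟨hp, hpb⟩)
      · exact .inr ((hle_d u (Finset.mem_filter.mp hu).1 (Finset.mem_filter.mp hu).2).trans
          (hd_lt.le.trans hpb))

theorem exists_bipartition_le_abs_sub_of_card_le {ι : Type*} [Fintype ι] [DecidableEq ι]
    (x : ι → α) {n : ℕ} {g : α} (hg : 0 < g) (hcard : Fintype.card ι ≤ n + 1) {i j : ι}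
    (hij : x i < x j) (hspan : n * g ≤ x j - x i) :
    ∃ S : Finset ι, S.Nonempty ∧ Sᶜ.Nonempty ∧ ∀ i ∈ S, ∀ j ∈ Sᶜ, g ≤ |x i - x j| := by
  obtain ⟨t, ht, u, hu, htu, hsplit⟩ := Finset.exists_gap_of_card_le_of_mul_le_sub hg
    (Finset.mem_image_of_mem x (Finset.mem_univ i)) (Finset.mem_image_of_mem x (Finset.mem_univ j))
    hij (Finset.card_image_le.trans (by simpa using hcard)) hspan
  obtain ⟨it, -, rfl⟩ := Finset.mem_image.mp ht
  obtain ⟨iu, -, rfl⟩ := Finset.mem_image.mp hu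
  refine ⟨Finset.univ.filter (x · ≤ x it), ⟨it, by simp⟩, ⟨iu, ?_⟩, fun a ha b hb => ?_⟩
  · simp only [Finset.mem_compl, Finset.mem_filter, Finset.mem_univ, true_and, not_le]
    linarith
  · simp only [Finset.mem_compl, Finset.mem_filter, Finset.mem_univ, true_and, not_le] at ha hb
    have hub : x iu ≤ x b :=
      (hsplit (x b) (Finset.mem_image_of_mem x (Finset.mem_univ b))).resolve_left hb.not_ge
    rw [abs_sub_comm, abs_of_nonneg (by linarith)]
    linarith

end

theorem Nat.sub_one_le_two_pow_sub_two (k : ℕ) : k - 1 ≤ 2 ^ (k - 2) :=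
  calc k - 1 ≤ k - 2 + 1 := by omega
    _ ≤ 2 ^ (k - 2) := (k - 2).lt_two_pow_self

theorem bipartition_gap_general (k : ℕ) (hk : 2 ≤ k) (x : Fin k → ℝ) (Δ : ℝ) (hΔ : 0 < Δ)
    (hattain : ∃ i j, |x i - x j| = Δ) :
    ∃ S : Finset (Fin k), S.Nonempty ∧ Sᶜ.Nonempty ∧
      ∀ i ∈ S, ∀ j ∈ Sᶜ, Δ / 2 ^ (k - 2) ≤ |x i - x j| := by
  obtain ⟨i, j, hij⟩ : ∃ i j, x j - x i = Δ := by
    obtain ⟨i, j, hij⟩ := hattain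
    rcases (abs_eq hΔ.le).mp hij with h | h
    · exact ⟨j, i, h⟩
    · exact ⟨i, j, by linarith⟩
  have hspan : ((k - 1 : ℕ) : ℝ) * (Δ / 2 ^ (k - 2)) ≤ x j - x i := by
    rw [hij, ← mul_div_assoc, div_le_iff₀ (by positivity), mul_comm]
    gcongr
    exact_mod_cast Nat.sub_one_le_two_pow_sub_two k
  exact exists_bipartition_le_abs_sub_of_card_le x (by positivity)
    (by rw [Fintype.card_fin]; omega) (by linarith) hspan

theorem bipartition_gap (k : ℕ) (hk : 2 ≤ k) (x : Fin k → ℝ) (Δ : ℝ) (hΔ : 0 < Δ)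
    (hmax : ∀ i j, |x i - x j| ≤ Δ)
    (hattain : ∃ i j, |x i - x j| = Δ) :
    ∃ S : Finset (Fin k), S.Nonempty ∧ Sᶜ.Nonempty ∧
      ∀ i ∈ S, ∀ j ∈ Sᶜ, Δ / 2 ^ (k - 2) ≤ |x i - x j| :=
  bipartition_gap_general k hk x Δ hΔ hattain
end

section
/- Given k strictly positive reals x₁,...,x_k (k ≥ 2) whose maximum ratio of any two is C > 1, there exists a bipartition into nonempty sets A and B such that for all x_i ∈ A and x_j ∈ B, x_i / x_j ≥ C^(1/2^k). -/
/-!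
Pass to logarithms. Cut the segment between the two points realising the ratio `C` into `2 ^ k`
intervals of length `log C / 2 ^ k`: fewer than `2 ^ k` of the `k` points lie beyond the first
interval, so some interval contains none of them, and splitting the points at that empty interval
separates them by at least its length.
-/

open Finset

variable {ι : Type*} [Fintype ι]

theorem exists_mem_Icc_forall_ne (b : ι → ℤ) {N : ℕ} (hN : Fintype.card ι ≤ N) {i₀ : ι}
    (h₀ : b i₀ = 0) : ∃ a ∈ Icc (1 : ℤ) N, ∀ i, b i ≠ a := by
  classical
  have hcard : #((univ.erase i₀).image b) < #(Icc (1 : ℤ) N) := by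
    calc #((univ.erase i₀).image b) ≤ #(univ.erase i₀) := card_image_le
      _ = Fintype.card ι - 1 := by rw [card_erase_of_mem (mem_univ _), card_univ]
      _ < N := by have := Fintype.card_pos_iff.mpr ⟨i₀⟩; omega
      _ = #(Icc (1 : ℤ) N) := by simp
  obtain ⟨a, ha, hmiss⟩ := exists_mem_notMem_of_card_lt_card hcard
  refine ⟨a, ha, fun i hi => ?_⟩
  by_cases hi₀ : i = i₀
  · subst hi₀
    have := (mem_Icc.mp ha).1
    omega
  · exact hmiss (mem_image.mpr ⟨i, mem_erase.mpr ⟨hi₀, mem_univ i⟩, hi⟩)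

theorem exists_finset_add_le_of_card_le (f : ι → ℝ) {δ : ℝ} (hδ : 0 < δ) {N : ℕ}
    (hN : Fintype.card ι ≤ N) {i₀ i₁ : ι} (h : f i₀ + N * δ ≤ f i₁) :
    ∃ S : Finset ι, i₁ ∈ S ∧ i₀ ∉ S ∧ ∀ i ∈ S, ∀ j ∉ S, f j + δ ≤ f i := by
  -- `f i` lies in the `b i`-th interval `[f i₀ + b i * δ, f i₀ + (b i + 1) * δ)`.
  set b : ι → ℤ := fun i => ⌊(f i - f i₀) / δ⌋
  obtain ⟨a, ha, hmiss⟩ := exists_mem_Icc_forall_ne b hN (i₀ := i₀) (by simp [b])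
  obtain ⟨ha₁, haN⟩ := mem_Icc.mp ha
  have above_iff (i : ι) : a < b i ↔ f i₀ + (a + 1) * δ ≤ f i := by
    rw [Int.lt_iff_add_one_le, Int.le_floor, le_div_iff₀ hδ]
    constructor <;> intro <;> push_cast at * <;> linarith
  have below_of_not_lt {j : ι} (hj : ¬ a < b j) : f j < f i₀ + a * δ := by
    have hlt : b j < a := lt_of_le_of_ne (not_lt.mp hj) (hmiss j)
    rw [Int.floor_lt, div_lt_iff₀ hδ] at hlt
    linarith
  refine ⟨univ.filter (a < b ·), ?_, ?_, fun i hi j hj => ?_⟩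
  · have hbN : (N : ℤ) ≤ b i₁ := by
      rw [Int.le_floor, le_div_iff₀ hδ]
      push_cast
      linarith
    simpa using lt_of_le_of_ne (haN.trans hbN) (hmiss i₁).symm
  · simpa [b] using ha₁.trans' zero_le_one
  · simp only [mem_filter, mem_univ, true_and] at hi hj
    linarith [(above_iff i).mp hi, below_of_not_lt hj]

theorem exists_finset_mul_le_of_card_le {x : ι → ℝ} (hx : ∀ i, 0 < x i) {r : ℝ} (hr : 1 < r)
    {N : ℕ} (hN : Fintype.card ι ≤ N) {i₀ i₁ : ι} (h : r ^ N * x i₀ ≤ x i₁) :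
    ∃ S : Finset ι, i₁ ∈ S ∧ i₀ ∉ S ∧ ∀ i ∈ S, ∀ j ∉ S, r * x j ≤ x i := by
  have hr₀ : 0 < r := zero_lt_one.trans hr
  have hlog : Real.log (x i₀) + N * Real.log r ≤ Real.log (x i₁) := by
    rw [← Real.log_pow, add_comm, ← Real.log_mul (pow_pos hr₀ N).ne' (hx i₀).ne']
    exact Real.log_le_log (mul_pos (pow_pos hr₀ N) (hx i₀)) h
  obtain ⟨S, h₁, h₀, hsep⟩ :=
    exists_finset_add_le_of_card_le (fun i => Real.log (x i)) (Real.log_pos hr) hN hlog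
  refine ⟨S, h₁, h₀, fun i hi j hj => ?_⟩
  rw [← Real.log_le_log_iff (mul_pos hr₀ (hx j)) (hx i), Real.log_mul hr₀.ne' (hx j).ne']
  linarith [hsep i hi j hj]

theorem bipartition_ratio_general (k : ℕ) (x : Fin k → ℝ) (C : ℝ) (hC : 1 < C)
    (hpos : ∀ i, 0 < x i)
    (hattain : ∃ i j, x i / x j = C) :
    ∃ S : Finset (Fin k), S.Nonempty ∧ Sᶜ.Nonempty ∧
      ∀ i ∈ S, ∀ j ∈ Sᶜ, C ^ ((1:ℝ) / 2 ^ k) ≤ x i / x j := by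
  obtain ⟨i₁, i₀, hratio⟩ := hattain
  set r := C ^ ((1:ℝ) / 2 ^ k)
  have hr : 1 < r := Real.one_lt_rpow hC (by positivity)
  have hrC : r ^ 2 ^ k = C := by
    rw [← Real.rpow_natCast, ← Real.rpow_mul (by positivity)]
    norm_num
  have hC_mul : r ^ 2 ^ k * x i₀ ≤ x i₁ := by
    rw [hrC, ← hratio, div_mul_cancel₀ _ (hpos i₀).ne']
  obtain ⟨S, h₁, h₀, hsep⟩ := exists_finset_mul_le_of_card_le hpos hr
    (by simpa using Nat.lt_two_pow_self.le) hC_mul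
  refine ⟨S, ⟨i₁, h₁⟩, ⟨i₀, mem_compl.mpr h₀⟩, fun i hi j hj => ?_⟩
  exact (le_div_iff₀ (hpos j)).mpr (hsep i hi j (mem_compl.mp hj))

theorem bipartition_ratio (k : ℕ) (hk : 2 ≤ k) (x : Fin k → ℝ) (C : ℝ) (hC : 1 < C)
    (hpos : ∀ i, 0 < x i)
    (hmax : ∀ i j, x i / x j ≤ C)
    (hattain : ∃ i j, x i / x j = C) :
    ∃ S : Finset (Fin k), S.Nonempty ∧ Sᶜ.Nonempty ∧
      ∀ i ∈ S, ∀ j ∈ Sᶜ, C ^ ((1:ℝ) / 2 ^ k) ≤ x i / x j :=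
  bipartition_ratio_general k x C hC hpos hattain
end
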